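/- Let AF be an argumentation framework, and a, b arguments with b → a. Suppose every other defeater c ≠ b of a has justification status {out} (i.e., every complete labelling labels c out). Then a and b are in-sync, and moreover the argument-wise plurality rule always legally collectively labels a: on any profile of complete labellings for which it is defined, the collective label of a together with the collective labels of a's defeaters satisfy the complete-labelling conditions at a. -/

import Mathlib

inductive Label : Type
  | inn | out | undec
  deriving DecidableEq

def Complete {A : Type} (att : A → A → Prop) (L : A → Label) : Prop :=
  (∀ a, L a = Label.inn → ∀ b, att b a → L b = Label.out) ∧
  (∀ a, L a = Label.out → ∃ b, att b a ∧ L b = Label.inn) ∧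
  (∀ a, L a = Label.undec →
    (∃ b, att b a ∧ L b = Label.undec) ∧ ¬ ∃ b, att b a ∧ L b = Label.inn)

/-- Number of agents labelling argument `a` with label `l` in profile `P`. -/
def count {A : Type} {n : ℕ} (P : Fin n → A → Label) (a : A) (l : Label) : ℕ :=
  (Finset.univ.filter fun i => P i a = l).card

/-- `l` is the strict plurality winner for argument `a` in profile `P`. -/
def IsPlu {A : Type} {n : ℕ} (P : Fin n → A → Label) (a : A) (l : Label) : Prop :=
  ∀ l', l' ≠ l → count P a l' < count P a l

/-- The argument-wise plurality rule is defined on `P` (no ties). -/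
def PluDefined {A : Type} {n : ℕ} (P : Fin n → A → Label) : Prop :=
  ∀ a, ∃ l, IsPlu P a l

def InSync {A : Type} (att : A → A → Prop) (a b : A) : Prop :=
  (∀ L, Complete att L → L a = L b) ∨
  (∀ L, Complete att L →
    ((L a = Label.inn ↔ L b = Label.out) ∧ (L a = Label.out ↔ L b = Label.inn)))

/-!
Every defeater of `a` other than `b` is `out` in every complete labelling, so in each complete
labelling `b` is the only defeater that can make `a` out or undecided; hence `b` carries the
label of `a` with `inn` and `out` exchanged. Each agent's labelling has this shape, so the vote
counts of `b` are those of `a` with `inn` and `out` exchanged, and the plurality label of `b` is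
the swapped plurality label of `a`. The other defeaters are unanimously `out`, which settles the
remaining legality conditions at `a`.
-/

namespace Label

def swap : Label → Label
  | inn => out
  | out => inn
  | undec => undec

@[simp]
theorem swap_swap (l : Label) : l.swap.swap = l := by
  cases l <;> rfl

theorem swap_eq_iff {l l' : Label} : l.swap = l' ↔ l = l'.swap := by
  cases l <;> cases l' <;> decide

end Label

theorem Complete.eq_swap_of_other_attackers_out {A : Type} {att : A → A → Prop} {L : A → Label}
    (hL : Complete att L) {a b : A} (hab : att b a)
    (hother : ∀ c, c ≠ b → att c a → L c = Label.out) :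
    L b = (L a).swap := by
  obtain ⟨hinn, hout, hundec⟩ := hL
  cases ha : L a with
  | inn => exact hinn a ha b hab
  | out =>
    obtain ⟨c, hca, hc⟩ := hout a ha
    obtain rfl : c = b := by
      by_contra hcb
      simp [hother c hcb hca] at hc
    exact hc
  | undec =>
    obtain ⟨⟨c, hca, hc⟩, -⟩ := hundec a ha
    obtain rfl : c = b := by
      by_contra hcb
      simp [hother c hcb hca] at hc
    exact hc

section Plurality

variable {A : Type} {n : ℕ} {P : Fin n → A → Label}

theorem count_eq_of_forall_eq_swap {a b : A} (h : ∀ i, P i b = (P i a).swap) (l : Label) :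
    count P b l = count P a l.swap := by
  unfold count
  congr 1
  exact Finset.filter_congr fun i _ => by rw [h i, Label.swap_eq_iff]

theorem isPlu_iff_of_forall_eq_swap {a b : A} (h : ∀ i, P i b = (P i a).swap) (l : Label) :
    IsPlu P b l ↔ IsPlu P a l.swap := by
  simp only [IsPlu, count_eq_of_forall_eq_swap h]
  constructor
  · intro hb l' hl'
    simpa using hb l'.swap (by rwa [Ne, Label.swap_eq_iff])
  · intro ha l' hl'
    exact ha l'.swap (by rwa [Ne, ← Label.swap_eq_iff, Label.swap_swap])

theorem IsPlu.unique {a : A} {l l' : Label} (h : IsPlu P a l) (h' : IsPlu P a l') : l = l' := by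
  by_contra hne
  exact lt_asymm (h l' (Ne.symm hne)) (h' l hne)

theorem IsPlu.pos {a : A} {l : Label} (h : IsPlu P a l) : 0 < n := by
  obtain ⟨l', hl'⟩ : ∃ l', l' ≠ l := by
    cases l
    exacts [⟨.out, nofun⟩, ⟨.inn, nofun⟩, ⟨.inn, nofun⟩]
  have hcount : 0 < count P a l := (Nat.zero_le _).trans_lt (h l' hl')
  exact hcount.trans_le ((Finset.card_filter_le _ _).trans_eq (Finset.card_fin n))

theorem isPlu_of_forall_eq {d : A} {l : Label} (h : ∀ i, P i d = l) (hn : 0 < n) :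
    IsPlu P d l := by
  intro l' hl'
  simp [count, h, hl'.symm, hn]

end Plurality

theorem stmt16_general {A : Type} {n : ℕ} (att : A → A → Prop) (a b : A)
    (hab : att b a)
    (hother : ∀ c, c ≠ b → att c a → ∀ L, Complete att L → L c = Label.out) :
    InSync att a b ∧
    (∀ P : Fin n → A → Label, (∀ i, Complete att (P i)) → PluDefined P →
      (IsPlu P a Label.out → ∃ d, att d a ∧ IsPlu P d Label.inn) ∧
      (IsPlu P a Label.inn → ∀ d, att d a → IsPlu P d Label.out) ∧
      (IsPlu P a Label.undec →
        (∃ d, att d a ∧ IsPlu P d Label.undec) ∧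
        ¬ ∃ d, att d a ∧ IsPlu P d Label.inn)) := by
  have hswap : ∀ L, Complete att L → L b = (L a).swap := fun L hL =>
    hL.eq_swap_of_other_attackers_out hab fun c hcb hca => hother c hcb hca L hL
  refine ⟨Or.inr fun L hL => ?_, fun P hP _ => ?_⟩
  · rw [hswap L hL]
    cases L a <;> decide
  have hb : ∀ l, IsPlu P b l ↔ IsPlu P a l.swap :=
    isPlu_iff_of_forall_eq_swap fun i => hswap _ (hP i)
  refine ⟨fun h => ⟨b, hab, (hb _).2 h⟩, fun h d hda => ?_,
    fun h => ⟨⟨b, hab, (hb _).2 h⟩, ?_⟩⟩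
  · by_cases hdb : d = b
    · exact hdb ▸ (hb _).2 h
    · exact isPlu_of_forall_eq (fun i => hother d hdb hda _ (hP i)) h.pos
  · rintro ⟨d, hda, hd⟩
    by_cases hdb : d = b
    · subst hdb
      exact Label.noConfusion (((hb _).1 hd).unique h)
    · exact Label.noConfusion
        ((isPlu_of_forall_eq (fun i => hother d hdb hda _ (hP i)) hd.pos).unique hd)

/-- if `b` defeats `a` and every other defeater `c ≠ b` of `a` has
justification status `{out}`, then `a` and `b` are in-sync and the argument-wise
plurality rule always legally collectively labels `a`. -/
theorem stmt16 {A : Type} [Fintype A] {n : ℕ} (att : A → A → Prop) (a b : A)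
    (hab : att b a)
    (hother : ∀ c, c ≠ b → att c a → ∀ L, Complete att L → L c = Label.out) :
    InSync att a b ∧
    (∀ P : Fin n → A → Label, (∀ i, Complete att (P i)) → PluDefined P →
      (IsPlu P a Label.out → ∃ d, att d a ∧ IsPlu P d Label.inn) ∧
      (IsPlu P a Label.inn → ∀ d, att d a → IsPlu P d Label.out) ∧
      (IsPlu P a Label.undec →
        (∃ d, att d a ∧ IsPlu P d Label.undec) ∧
        ¬ ∃ d, att d a ∧ IsPlu P d Label.inn)) :=
  stmt16_general att a b hab hother
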